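/- arXiv:1807.03028 — 8 statements merged into one kernel-verified Lean document; each statement's English description precedes it below -/
import Mathlib

section
/- Every bornology with a countable base is antitall: if 𝓑 is a bornology on X with a countable base and Y ⊆ X is unbounded (Y ∉ 𝓑), then Y contains an infinite subset Z such that every bounded subset of Z is finite. -/
def IsIdeal {X : Type*} (I : Set (Set X)) : Prop :=
  ∅ ∈ I ∧ (∀ A ∈ I, ∀ B : Set X, B ⊆ A → B ∈ I) ∧ (∀ A ∈ I, ∀ B ∈ I, A ∪ B ∈ I)

def IsBornology {X : Type*} (B : Set (Set X)) : Prop :=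
  IsIdeal B ∧ (∀ A : Set X, A.Finite → A ∈ B) ∧ ⋃₀ B = Set.univ

theorem stmt1 {X : Type*} (𝓑 𝓑' : Set (Set X)) (hb : IsBornology 𝓑)
    (hsub : 𝓑' ⊆ 𝓑) (hcnt : 𝓑'.Countable)
    (hbase : ∀ B ∈ 𝓑, ∃ B' ∈ 𝓑', B ⊆ B')
    (Y : Set X) (hY : Y ∉ 𝓑) :
    ∃ Z ⊆ Y, Z.Infinite ∧ ∀ B ∈ 𝓑, B ⊆ Z → B.Finite := by
  obtain ⟨hIdeal, hfin, _⟩ := hb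
  obtain ⟨hempty, hdown, hunion⟩ := hIdeal
  -- 𝓑' is nonempty
  obtain ⟨B0, hB0, -⟩ := hbase ∅ hempty
  obtain ⟨f, hf⟩ := hcnt.exists_eq_range ⟨B0, hB0⟩
  have hfB : ∀ i, f i ∈ 𝓑 := fun i => hsub (hf ▸ Set.mem_range_self i)
  set C : ℕ → Set X := fun n => ⋃ i ∈ Finset.range (n + 1), f i with hCdef
  have hC : ∀ n, C n ∈ 𝓑 := by
    intro n
    induction n with
    | zero => simpa [hCdef] using hfB 0
    | succ n ih =>
      have : C (n + 1) = C n ∪ f (n + 1) := by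
        simp only [hCdef, Finset.range_add_one, Finset.set_biUnion_insert]
        rw [Set.union_comm]
      rw [this]
      exact hunion _ ih _ (hfB (n + 1))
  have hCk : ∀ k n, k ≤ n → f k ⊆ C n := by
    intro k n hkn
    exact Set.subset_biUnion_of_mem (Finset.mem_range.mpr (by omega))
  have key : ∀ n, ∃ x, x ∈ Y ∧ x ∉ C n := by
    intro n
    by_contra h
    push_neg at h
    exact hY (hdown _ (hC n) Y h)
  choose z hzY hzC using key
  refine ⟨Set.range z, ?_, ?_, ?_⟩
  · rintro x ⟨n, rfl⟩; exact hzY n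
  · intro hfin'
    have hZB : Set.range z ∈ 𝓑 := hfin _ hfin'
    obtain ⟨B', hB', hsub'⟩ := hbase _ hZB
    rw [hf] at hB'
    obtain ⟨k, rfl⟩ := hB'
    exact hzC k (hCk k k le_rfl (hsub' (Set.mem_range_self k)))
  · intro B hB hBZ
    obtain ⟨B', hB', hsub'⟩ := hbase B hB
    rw [hf] at hB'
    obtain ⟨k, rfl⟩ := hB'
    have : B ⊆ z '' (Set.Iio k) := by
      intro x hx
      obtain ⟨m, rfl⟩ := hBZ hx
      refine ⟨m, ?_, rfl⟩
      by_contra hm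
      exact hzC m (hCk k m (by simpa using hm) (hsub' hx))
    exact Set.Finite.subset ((Set.finite_Iio k).image z) this
end

section
/- For every bornology 𝓑 on a set X with a countable base, there exists a metric d on X such that 𝓑 coincides with the family of all d-bounded subsets of X. -/
theorem stmt2 {X : Type*} (𝓑 𝓑' : Set (Set X)) (hb : IsBornology 𝓑)
    (hsub : 𝓑' ⊆ 𝓑) (hcnt : 𝓑'.Countable)
    (hbase : ∀ B ∈ 𝓑, ∃ B' ∈ 𝓑', B ⊆ B') :
    ∃ d : X → X → ℝ,
      (∀ x y, d x y = 0 ↔ x = y) ∧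
      (∀ x y, d x y = d y x) ∧
      (∀ x y z, d x z ≤ d x y + d y z) ∧
      (∀ A : Set X, A ∈ 𝓑 ↔ ∃ C : ℝ, ∀ x ∈ A, ∀ y ∈ A, d x y ≤ C) := by
  classical
  obtain ⟨⟨hempty, hdown, hunion⟩, hfin, -⟩ := hb
  -- trivial case: X empty
  by_cases hX : Nonempty X
  swap
  · refine ⟨fun _ _ => 0, ?_, ?_, ?_, ?_⟩
    · intro x; exact absurd ⟨x⟩ hX
    · intro x; exact absurd ⟨x⟩ hX
    · intro x; exact absurd ⟨x⟩ hX
    · intro A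
      constructor
      · intro _; exact ⟨0, fun x hx => absurd ⟨x⟩ hX⟩
      · intro _
        have : A = ∅ := by
          ext x; simp only [Set.mem_empty_iff_false, iff_false]
          intro _; exact hX ⟨x⟩
        rw [this]; exact hempty
  -- 𝓑' is nonempty
  obtain ⟨x₀⟩ := hX
  have hne : 𝓑'.Nonempty := by
    obtain ⟨B', hB', -⟩ := hbase {x₀} (hfin _ (Set.finite_singleton x₀))
    exact ⟨B', hB'⟩
  obtain ⟨e, he⟩ := Set.Countable.exists_eq_range hcnt hne
  have heB : ∀ n, e n ∈ 𝓑 := fun n => hsub (he ▸ Set.mem_range_self n)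
  -- each x is in some e n
  have hcov : ∀ x : X, ∃ n, x ∈ e n := by
    intro x
    obtain ⟨B', hB', hxB'⟩ := hbase {x} (hfin _ (Set.finite_singleton x))
    rw [he] at hB'
    obtain ⟨n, rfl⟩ := hB'
    exact ⟨n, hxB' rfl⟩
  set r : X → ℕ := fun x => Nat.find (hcov x) with hr
  have hrx : ∀ x, x ∈ e (r x) := fun x => Nat.find_spec (hcov x)
  -- S N = union of e 0 .. e N
  set S : ℕ → Set X := fun N => ⋃ k ∈ Finset.range (N + 1), e k with hS
  have hSB : ∀ N, S N ∈ 𝓑 := by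
    intro N
    induction N with
    | zero =>
        have : S 0 = e 0 := by simp [hS]
        rw [this]; exact heB 0
    | succ n ih =>
        have : S (n + 1) = S n ∪ e (n + 1) := by
          simp only [hS]
          ext x
          simp [Finset.mem_range, Nat.lt_succ_iff]
          constructor
          · rintro ⟨k, hk, hxk⟩
            rcases Nat.lt_or_ge k (n + 1) with h | h
            · exact Or.inl ⟨k, Nat.le_of_lt_succ h, hxk⟩
            · exact Or.inr (by rwa [le_antisymm hk h] at hxk)
          · rintro (⟨k, hk, hxk⟩ | hx)
            · exact ⟨k, hk.trans (Nat.le_succ n), hxk⟩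
            · exact ⟨n + 1, le_refl _, hx⟩
        rw [this]; exact hunion _ ih _ (heB (n + 1))
  have hxS : ∀ (x : X) (N : ℕ), r x ≤ N → x ∈ S N := by
    intro x N hN
    exact Set.mem_biUnion (Finset.mem_range.mpr (Nat.lt_succ_of_le hN)) (hrx x)
  -- the metric
  set d : X → X → ℝ := fun x y => if x = y then 0 else (max (r x) (r y) : ℕ) + 1 with hd
  have hd0 : ∀ x y, d x y = 0 ↔ x = y := by
    intro x y
    simp only [hd]
    split
    · simpa
    · rename_i h
      constructor
      · intro habs
        have : (0:ℝ) ≤ (max (r x) (r y) : ℕ) := Nat.cast_nonneg _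
        linarith
      · intro h'; exact absurd h' h
  have hdnn : ∀ x y, 0 ≤ d x y := by
    intro x y
    simp only [hd]
    split
    · exact le_refl 0
    · positivity
  refine ⟨d, hd0, ?_, ?_, ?_⟩
  · intro x y
    simp only [hd]
    by_cases h : x = y
    · simp [h]
    · simp [h, Ne.symm h, max_comm]
  · intro x y z
    by_cases hxz : x = z
    · rw [(hd0 x z).mpr hxz]
      exact add_nonneg (hdnn x y) (hdnn y z)
    by_cases hxy : x = y
    · subst hxy
      rw [(hd0 x x).mpr rfl]; simp
    by_cases hyz : y = z
    · subst hyz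
      rw [(hd0 y y).mpr rfl]; simp
    simp only [hd, if_neg hxz, if_neg hxy, if_neg hyz]
    have h1 : max (r x) (r z) ≤ max (r x) (r y) + max (r y) (r z) := by
      apply max_le
      · exact le_add_right (le_max_left _ _)
      · exact le_add_left (le_max_right _ _)
    have : ((max (r x) (r z) : ℕ) : ℝ) ≤ ((max (r x) (r y) : ℕ) : ℝ) + ((max (r y) (r z) : ℕ) : ℝ) := by
      exact_mod_cast h1
    linarith
  · intro A
    constructor
    · intro hA
      obtain ⟨B', hB', hAB'⟩ := hbase A hA
      rw [he] at hB'
      obtain ⟨n, rfl⟩ := hB'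
      refine ⟨(n : ℝ) + 1, fun x hx y hy => ?_⟩
      have hrxn : r x ≤ n := Nat.find_min' (hcov x) (hAB' hx)
      have hryn : r y ≤ n := Nat.find_min' (hcov y) (hAB' hy)
      simp only [hd]
      split
      · positivity
      · have : max (r x) (r y) ≤ n := max_le hrxn hryn
        have : ((max (r x) (r y) : ℕ) : ℝ) ≤ (n : ℝ) := by exact_mod_cast this
        linarith
    · rintro ⟨C, hC⟩
      rcases Set.eq_empty_or_nonempty A with rfl | ⟨y, hy⟩
      · exact hempty
      obtain ⟨N, hN⟩ := exists_nat_ge C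
      have hsubset : A ⊆ S N ∪ {y} := by
        intro x hx
        by_cases hxy : x = y
        · exact Or.inr (by simp [hxy])
        · left
          have := hC x hx y hy
          simp only [hd, if_neg hxy] at this
          have hrx' : ((r x : ℕ) : ℝ) + 1 ≤ C := by
            have : ((max (r x) (r y) : ℕ) : ℝ) + 1 ≤ C := this
            have h2 : ((r x : ℕ) : ℝ) ≤ ((max (r x) (r y) : ℕ) : ℝ) := by
              exact_mod_cast le_max_left _ _
            linarith
          have : ((r x : ℕ) : ℝ) ≤ (N : ℝ) := by linarith
          exact hxS x N (by exact_mod_cast this)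
      exact hdown _ (hunion _ (hSB N) _ (hfin _ (Set.finite_singleton y))) _ hsubset
end

section
/- Let G be a group and 𝓘 an ideal on G. Then 𝓘 is left translation invariant (g·A ∈ 𝓘 for all g ∈ G, A ∈ 𝓘) if and only if 𝓘^∧ = {p ∈ βG : ∀A ∈ 𝓘, G∖A ∈ p} is a left ideal of the semigroup βG, i.e., q·p ∈ 𝓘^∧ for all q ∈ βG and p ∈ 𝓘^∧. -/
def hatSet {G : Type*} (I : Set (Set G)) : Set (Ultrafilter G) :=
  {p | ∀ A ∈ I, Aᶜ ∈ p}

/-- The standard semigroup multiplication on `βG`: `S ∈ q * p` iff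
`{x : x⁻¹S ∈ p} ∈ q`. -/
def ufMul {G : Type*} [Group G] (q p : Ultrafilter G) : Ultrafilter G :=
  q.bind fun x => p.map fun y => x * y

lemma mem_ufMul {G : Type*} [Group G] (q p : Ultrafilter G) (s : Set G) :
    s ∈ ufMul q p ↔ {x : G | (fun y => x * y) ⁻¹' s ∈ p} ∈ q := by
  show s ∈ Filter.bind ↑q (fun x => ↑(p.map fun y => x * y)) ↔ _
  rw [Filter.mem_bind']
  rfl

lemma image_mul_inv {G : Type*} [Group G] (x : G) (A : Set G) :
    (fun y => x⁻¹ * y) '' A = (fun y => x * y) ⁻¹' A := by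
  ext y
  simp only [Set.mem_image, Set.mem_preimage]
  constructor
  · rintro ⟨a, ha, rfl⟩; simpa using ha
  · intro hy; exact ⟨x * y, hy, by group⟩

theorem stmt4 {G : Type*} [Group G] (𝓘 : Set (Set G)) (hI : IsIdeal 𝓘) :
    (∀ g : G, ∀ A ∈ 𝓘, (fun x => g * x) '' A ∈ 𝓘) ↔
      ∀ q : Ultrafilter G, ∀ p ∈ hatSet 𝓘, ufMul q p ∈ hatSet 𝓘 := by
  obtain ⟨hempty, hdown, hunion⟩ := hI
  constructor
  · intro hinv q p hp A hA
    rw [mem_ufMul]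
    have : {x : G | (fun y => x * y) ⁻¹' Aᶜ ∈ p} = Set.univ := by
      ext x
      simp only [Set.mem_setOf_eq, Set.mem_univ, iff_true]
      have : (fun y => x * y) ⁻¹' Aᶜ = ((fun y => x⁻¹ * y) '' A)ᶜ := by
        rw [image_mul_inv, Set.preimage_compl]
      rw [this]
      exact hp _ (hinv x⁻¹ A hA)
    rw [this]
    exact Filter.univ_mem
  · intro h g A hA
    by_contra hgA
    set S := (fun x => g * x) '' A with hS
    let F : Filter G :=
      { sets := {C | ∃ B ∈ 𝓘, Bᶜ ⊆ C}
        univ_sets := ⟨∅, hempty, by simp⟩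
        sets_of_superset := fun ⟨B, hB, hBC⟩ hCD => ⟨B, hB, hBC.trans hCD⟩
        inter_sets := fun ⟨B, hB, hBC⟩ ⟨B', hB', hBC'⟩ =>
          ⟨B ∪ B', hunion B hB B' hB', by
            rw [Set.compl_union]
            exact Set.subset_inter ((Set.inter_subset_left).trans hBC)
              ((Set.inter_subset_right).trans hBC')⟩ }
    have hne : (F ⊓ Filter.principal S).NeBot := by
      rw [Filter.inf_principal_neBot_iff]
      rintro U ⟨B, hB, hBU⟩
      by_contra hemp
      rw [Set.not_nonempty_iff_eq_empty] at hemp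
      have hsub : S ⊆ B := by
        intro y hy
        by_contra hyB
        exact absurd hemp (Set.nonempty_iff_ne_empty.mp ⟨y, hBU hyB, hy⟩)
      exact hgA (hdown B hB S hsub)
    obtain ⟨p, hp⟩ := Ultrafilter.exists_le (F ⊓ Filter.principal S)
    have hpF : ∀ B ∈ 𝓘, Bᶜ ∈ p := fun B hB =>
      hp (Filter.mem_inf_of_left ⟨B, hB, le_refl _⟩)
    have hpS : S ∈ p := hp (Filter.mem_inf_of_right (Filter.mem_principal_self S))
    have hmem0 := h (pure g⁻¹) p hpF A hA
    rw [mem_ufMul] at hmem0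
    have hmem : (fun y => g⁻¹ * y) ⁻¹' Aᶜ ∈ p := by
      simpa using hmem0
    have hScompl : (fun y => g⁻¹ * y) ⁻¹' Aᶜ = Sᶜ := by
      rw [hS, Set.preimage_compl]
      congr 1
      have := image_mul_inv (G := G) g⁻¹ A
      rw [inv_inv] at this
      rw [← this]
    rw [hScompl] at hmem
    exact (Ultrafilter.compl_notMem_iff.mpr hpS) hmem
end

section
/- For every infinite group G, the family Sm_G of all small subsets of G is a left and right invariant bornology on G: it contains all finite sets, is closed under subsets and finite unions, covers G, and is closed under left and right translations. -/
open Pointwise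

/-- A subset `A` of a group is large if `G = F * A` for some finite `F`. -/
def IsLarge {G : Type*} [Group G] (A : Set G) : Prop :=
  ∃ F : Set G, F.Finite ∧ F * A = Set.univ

/-- A subset `A` is small if `L \ A` is large for every large `L`. -/
def IsSmall {G : Type*} [Group G] (A : Set G) : Prop :=
  ∀ L : Set G, IsLarge L → IsLarge (L \ A)

lemma isLarge_mono {G : Type*} [Group G] {A B : Set G} (h : A ⊆ B) (hA : IsLarge A) :
    IsLarge B := by
  obtain ⟨F, hF, hFA⟩ := hA
  exact ⟨F, hF, Set.eq_univ_of_univ_subset (hFA ▸ Set.mul_subset_mul_left h)⟩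

lemma isLarge_diff_finite {G : Type*} [Group G] [Infinite G] {L A : Set G}
    (hL : IsLarge L) (hA : A.Finite) : IsLarge (L \ A) := by
  obtain ⟨E, hE, hEL⟩ := hL
  have hK : (E * A * (E * A)⁻¹).Finite := (hE.mul hA).mul (hE.mul hA).inv
  obtain ⟨g, hg⟩ := hK.infinite_compl.nonempty
  refine ⟨({1, g} : Set G) * E, ((Set.finite_singleton g).insert 1).mul hE, ?_⟩
  apply Set.eq_univ_of_forall
  intro x
  have key : x ∉ E * A ∨ g⁻¹ * x ∉ E * A := by
    by_contra h
    push_neg at h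
    apply hg
    have : x * (g⁻¹ * x)⁻¹ ∈ E * A * (E * A)⁻¹ :=
      Set.mul_mem_mul h.1 (Set.inv_mem_inv.2 h.2)
    simpa [mul_inv_rev, mul_assoc] using this
  rcases key with h | h
  · have hx : x ∈ E * L := by rw [hEL]; trivial
    obtain ⟨e, he, l, hl, rfl⟩ := hx
    have hla : l ∉ A := fun hla => h (Set.mul_mem_mul he hla)
    have := Set.mul_mem_mul
      (Set.mul_mem_mul (show (1:G) ∈ ({1, g} : Set G) by simp) he)
      (show l ∈ L \ A from ⟨hl, hla⟩)
    simpa using this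
  · have hx : g⁻¹ * x ∈ E * L := by rw [hEL]; trivial
    obtain ⟨e, he, l, hl, heq⟩ := hx
    have heq : e * l = g⁻¹ * x := heq
    have hla : l ∉ A := fun hla => h (heq ▸ Set.mul_mem_mul he hla)
    have := Set.mul_mem_mul
      (Set.mul_mem_mul (show g ∈ ({1, g} : Set G) by simp) he)
      (show l ∈ L \ A from ⟨hl, hla⟩)
    have hxeq : g * e * l = x := by
      rw [mul_assoc, heq, mul_inv_cancel_left]
    rwa [hxeq] at this

lemma isLarge_image_mul_left {G : Type*} [Group G] {L : Set G} (g : G) (hL : IsLarge L) :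
    IsLarge ((fun x => g * x) '' L) := by
  obtain ⟨F, hF, hFL⟩ := hL
  refine ⟨F * {g⁻¹}, hF.mul (Set.finite_singleton _), Set.eq_univ_of_forall fun x => ?_⟩
  have hx : x ∈ F * L := by rw [hFL]; trivial
  obtain ⟨f, hf, l, hl, rfl⟩ := hx
  have := Set.mul_mem_mul
    (Set.mul_mem_mul hf (Set.mem_singleton g⁻¹))
    (Set.mem_image_of_mem (fun x => g * x) hl)
  simpa [mul_assoc] using this

lemma isLarge_image_mul_right {G : Type*} [Group G] {L : Set G} (g : G) (hL : IsLarge L) :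
    IsLarge ((fun x => x * g) '' L) := by
  obtain ⟨F, hF, hFL⟩ := hL
  refine ⟨F, hF, Set.eq_univ_of_forall fun x => ?_⟩
  have hx : x * g⁻¹ ∈ F * L := by rw [hFL]; trivial
  obtain ⟨f, hf, l, hl, heq⟩ := hx
  have heq : f * l = x * g⁻¹ := heq
  have := Set.mul_mem_mul hf (Set.mem_image_of_mem (fun x => x * g) hl)
  have hxeq : f * (l * g) = x := by
    rw [← mul_assoc, heq, inv_mul_cancel_right]
  rwa [hxeq] at this

theorem stmt6 {G : Type*} [Group G] [Infinite G] :
    (∀ A : Set G, A.Finite → IsSmall A) ∧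
    (∀ A : Set G, IsSmall A → ∀ B ⊆ A, IsSmall B) ∧
    (∀ A B : Set G, IsSmall A → IsSmall B → IsSmall (A ∪ B)) ∧
    (⋃₀ {A : Set G | IsSmall A} = Set.univ) ∧
    (∀ g : G, ∀ A : Set G, IsSmall A → IsSmall ((fun x => g * x) '' A)) ∧
    (∀ g : G, ∀ A : Set G, IsSmall A → IsSmall ((fun x => x * g) '' A)) := by
  have hfin : ∀ A : Set G, A.Finite → IsSmall A :=
    fun A hA L hL => isLarge_diff_finite hL hA
  refine ⟨hfin, ?_, ?_, ?_, ?_, ?_⟩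
  · intro A hA B hBA L hL
    exact isLarge_mono (Set.diff_subset_diff_right hBA) (hA L hL)
  · intro A B hA hB L hL
    have := hB _ (hA L hL)
    rwa [Set.diff_diff] at this
  · apply Set.eq_univ_of_forall
    intro x
    exact ⟨{x}, hfin {x} (Set.finite_singleton x), rfl⟩
  · intro g A hA L hL
    have h1 := isLarge_image_mul_left g⁻¹ hL
    have h2 := hA _ h1
    have h3 := isLarge_image_mul_left g h2
    have heq : (fun x => g * x) '' ((fun x => g⁻¹ * x) '' L \ A)
        = L \ (fun x => g * x) '' A := by
      rw [Set.image_diff (mul_right_injective g), Set.image_image]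
      simp
    rwa [heq] at h3
  · intro g A hA L hL
    have h1 := isLarge_image_mul_right g⁻¹ hL
    have h2 := hA _ h1
    have h3 := isLarge_image_mul_right g h2
    have heq : (fun x => x * g) '' ((fun x => x * g⁻¹) '' L \ A)
        = L \ (fun x => x * g) '' A := by
      rw [Set.image_diff (mul_left_injective g), Set.image_image]
      simp
    rwa [heq] at h3
end

section
/- For every infinite group G, the family Sp_G of all sparse subsets of G is a left and right translation invariant ideal on G containing all finite sets. -/
/-- A subset `A` of a group `G` is sparse if for every infinite `X ⊆ G`
there is a finite `F ⊆ X` with `⋂_{g ∈ F} gA` finite. -/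
def IsSparse {G : Type*} [Group G] (A : Set G) : Prop :=
  ∀ X : Set G, X.Infinite → ∃ F : Set G, F ⊆ X ∧ F.Finite ∧
    (⋂ g ∈ F, (fun x => g * x) '' A).Finite

/-!
A set `A` is sparse exactly when, for every nonprincipal ultrafilter `U` on `G`, only finitely
many `g` satisfy `gA ∈ U`: if infinitely many did, finitely many of them would already have a
finite intersection lying in `U`; conversely, if every finite intersection of the `gA`, `g ∈ X`,
is infinite, these sets together with the cofinite filter generate a nonprincipal ultrafilter.
In this form all closure properties are immediate: the set of such `g` is monotone in `A` and
additive over unions because `U` is an ultrafilter, it is translated on the right by `h⁻¹` when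
`A` is replaced by `hA`, and replacing `A` by `Ah` amounts to translating `U` by `h⁻¹`.
-/

open Filter Set

theorem Ultrafilter.infinite_of_mem_of_le_cofinite {α : Type*} {U : Ultrafilter α}
    (hU : (U : Filter α) ≤ cofinite) {s : Set α} (hs : s ∈ U) : s.Infinite :=
  frequently_cofinite_iff_infinite.mp ((U.eventually_iff.mpr hs).frequently.filter_mono hU)

theorem Ultrafilter.map_le_cofinite {α β : Type*} {U : Ultrafilter α}
    (hU : (U : Filter α) ≤ cofinite) {f : α → β} (hf : f.Injective) :
    (U.map f : Filter β) ≤ cofinite :=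
  (map_mono hU).trans hf.tendsto_cofinite

theorem exists_ultrafilter_le_cofinite_of_biInter_infinite {α ι : Type*} (s : ι → Set α)
    (I : Set ι) (hI : ∀ F ⊆ I, F.Finite → (⋂ i ∈ F, s i).Infinite) :
    ∃ U : Ultrafilter α, (U : Filter α) ≤ cofinite ∧ ∀ i ∈ I, s i ∈ U := by
  let f (F : {F : Set ι // F ⊆ I ∧ F.Finite}) : Filter α :=
    cofinite ⊓ 𝓟 (⋂ i ∈ F.1, s i)
  have hdir : Directed (· ≥ ·) f := fun F₁ F₂ =>
    ⟨⟨F₁.1 ∪ F₂.1, union_subset F₁.2.1 F₂.2.1, F₁.2.2.union F₂.2.2⟩,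
      inf_le_inf_left _ (principal_mono.2 (biInter_subset_biInter_left subset_union_left)),
      inf_le_inf_left _ (principal_mono.2 (biInter_subset_biInter_left subset_union_right))⟩
  have : Nonempty {F : Set ι // F ⊆ I ∧ F.Finite} := ⟨⟨∅, empty_subset I, finite_empty⟩⟩
  have : (⨅ F, f F).NeBot :=
    iInf_neBot_of_directed' hdir fun F => (hI F.1 F.2.1 F.2.2).cofinite_inf_principal_neBot
  obtain ⟨U, hU⟩ := Ultrafilter.exists_le (⨅ F, f F)
  refine ⟨U, hU.trans ((iInf_le f ⟨∅, empty_subset I, finite_empty⟩).trans inf_le_left),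
    fun i hi => ?_⟩
  have hUi := (iInf_le f ⟨{i}, singleton_subset_iff.2 hi, finite_singleton i⟩).trans inf_le_right
  simpa using le_principal_iff.mp (hU.trans hUi)

section

variable {G : Type*} [Group G]

def translatorsIn (U : Ultrafilter G) (A : Set G) : Set G := {g | (fun x => g * x) '' A ∈ U}

theorem isSparse_iff_forall_ultrafilter {A : Set G} :
    IsSparse A ↔
      ∀ U : Ultrafilter G, (U : Filter G) ≤ cofinite → (translatorsIn U A).Finite := by
  constructor
  · intro hA U hU
    by_contra hinf
    obtain ⟨F, hFX, hF, hFA⟩ := hA _ hinf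
    exact U.infinite_of_mem_of_le_cofinite hU ((biInter_mem hF).2 fun g hg => hFX hg) hFA
  · intro h X hX
    by_contra! hX'
    obtain ⟨U, hU, hXU⟩ := exists_ultrafilter_le_cofinite_of_biInter_infinite
      (fun g => (fun x => g * x) '' A) X fun F hFX hF => hX' F hFX hF
    exact hX.mono hXU (h U hU)

theorem translatorsIn_mono (U : Ultrafilter G) {A B : Set G} (hBA : B ⊆ A) :
    translatorsIn U B ⊆ translatorsIn U A :=
  fun _ hg => mem_of_superset hg (image_mono hBA)

theorem translatorsIn_union (U : Ultrafilter G) (A B : Set G) :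
    translatorsIn U (A ∪ B) = translatorsIn U A ∪ translatorsIn U B := by
  ext g
  simp only [translatorsIn, mem_ofPred_eq, image_union, Ultrafilter.union_mem_iff, mem_union]

theorem translatorsIn_image_mul_left (U : Ultrafilter G) (h : G) (A : Set G) :
    translatorsIn U ((fun x => h * x) '' A) = (fun g => g * h) ⁻¹' translatorsIn U A := by
  ext g
  simp only [translatorsIn, mem_ofPred_eq, mem_preimage, image_image, mul_assoc]

theorem translatorsIn_image_mul_right (U : Ultrafilter G) (h : G) (A : Set G) :
    translatorsIn U ((fun x => x * h) '' A) = translatorsIn (U.map (fun x => x * h⁻¹)) A := by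
  ext g
  have : (fun x => x * h⁻¹) ⁻¹' ((fun x => g * x) '' A) =
      (fun x => g * x) '' ((fun x => x * h) '' A) := by
    ext x
    simp [mul_assoc]
  simp only [translatorsIn, mem_ofPred_eq, Ultrafilter.mem_map, this]

theorem IsSparse.of_finite {A : Set G} (hA : A.Finite) : IsSparse A := fun X hX =>
  let ⟨x, hx⟩ := hX.nonempty
  ⟨{x}, singleton_subset_iff.2 hx, finite_singleton x,
    by rw [biInter_singleton]; exact hA.image _⟩

theorem IsSparse.mono {A B : Set G} (hA : IsSparse A) (hBA : B ⊆ A) : IsSparse B :=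
  isSparse_iff_forall_ultrafilter.2 fun U hU =>
    (isSparse_iff_forall_ultrafilter.1 hA U hU).subset (translatorsIn_mono U hBA)

theorem IsSparse.union {A B : Set G} (hA : IsSparse A) (hB : IsSparse B) : IsSparse (A ∪ B) :=
  isSparse_iff_forall_ultrafilter.2 fun U hU => by
    rw [translatorsIn_union]
    exact (isSparse_iff_forall_ultrafilter.1 hA U hU).union
      (isSparse_iff_forall_ultrafilter.1 hB U hU)

theorem IsSparse.image_mul_left {A : Set G} (hA : IsSparse A) (h : G) :
    IsSparse ((fun x => h * x) '' A) :=
  isSparse_iff_forall_ultrafilter.2 fun U hU => by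
    rw [translatorsIn_image_mul_left]
    exact (isSparse_iff_forall_ultrafilter.1 hA U hU).preimage (mul_left_injective h).injOn

theorem IsSparse.image_mul_right {A : Set G} (hA : IsSparse A) (h : G) :
    IsSparse ((fun x => x * h) '' A) :=
  isSparse_iff_forall_ultrafilter.2 fun U hU => by
    rw [translatorsIn_image_mul_right]
    exact isSparse_iff_forall_ultrafilter.1 hA _ (U.map_le_cofinite hU (mul_left_injective h⁻¹))

end

theorem stmt7_general {G : Type*} [Group G] :
    (∀ A : Set G, A.Finite → IsSparse A) ∧
    (∀ A : Set G, IsSparse A → ∀ B ⊆ A, IsSparse B) ∧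
    (∀ A B : Set G, IsSparse A → IsSparse B → IsSparse (A ∪ B)) ∧
    (∀ g : G, ∀ A : Set G, IsSparse A → IsSparse ((fun x => g * x) '' A)) ∧
    (∀ g : G, ∀ A : Set G, IsSparse A → IsSparse ((fun x => x * g) '' A)) :=
  ⟨fun _ => IsSparse.of_finite, fun _ hA _ => hA.mono, fun _ _ => IsSparse.union,
    fun g _ hA => hA.image_mul_left g, fun g _ hA => hA.image_mul_right g⟩

theorem stmt7 {G : Type*} [Group G] [Infinite G] :
    (∀ A : Set G, A.Finite → IsSparse A) ∧
    (∀ A : Set G, IsSparse A → ∀ B ⊆ A, IsSparse B) ∧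
    (∀ A B : Set G, IsSparse A → IsSparse B → IsSparse (A ∪ B)) ∧
    (∀ g : G, ∀ A : Set G, IsSparse A → IsSparse ((fun x => g * x) '' A)) ∧
    (∀ g : G, ∀ A : Set G, IsSparse A → IsSparse ((fun x => x * g) '' A)) :=
  stmt7_general
end

section
/- Let G be an infinite group. A subset A ⊆ G is sparse if and only if no ultrafilter in the closure of G*·G* contains A, where G* is the set of free ultrafilters on G; i.e., Sp_G^∧ = cl(G*G*). Equivalently: A is not sparse if and only if A ∈ qp for some free ultrafilters q, p on G. -/
/-- An ultrafilter is free if it is not principal. -/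
def IsFreeUF {G : Type*} (p : Ultrafilter G) : Prop :=
  ∀ x : G, p ≠ (pure x : Ultrafilter G)
/-!
For a free ultrafilter `p`, put `T p = {g | gA ∈ p}`. If `A` is not sparse, witnessed by an infinite
`X` all of whose finite intersections of translates `gA` (`g ∈ X`) are infinite, these translates
together with the cofinite sets have the finite intersection property, so some free `p` has
`X ⊆ T p`. Conversely, if `T p` is infinite, `X = T p` witnesses non-sparseness, since finite
intersections of members of `p` lie in `p` and are therefore infinite. Finally `A ∈ qp` says exactly
that `(T p)⁻¹ ∈ q`, and an infinite set belongs to some free ultrafilter.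
-/

open Filter Set
open scoped Pointwise

section FreeUltrafilter

variable {α : Type*}

lemma isFreeUF_iff_le_cofinite (p : Ultrafilter α) : IsFreeUF p ↔ (p : Filter α) ≤ cofinite := by
  constructor
  · intro hp
    rcases p.le_cofinite_or_eq_pure with hle | ⟨a, rfl⟩
    · exact hle
    · exact absurd rfl (hp a)
  · rintro hle x rfl
    simpa using hle (finite_singleton x).compl_mem_cofinite

lemma IsFreeUF.infinite_of_mem {p : Ultrafilter α} (hp : IsFreeUF p) {s : Set α} (hs : s ∈ p) :
    s.Infinite := fun hfin =>
  Ultrafilter.compl_notMem_iff.2 hs ((isFreeUF_iff_le_cofinite p).1 hp hfin.compl_mem_cofinite)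

lemma exists_isFreeUF_mem_iff_infinite {s : Set α} :
    (∃ p : Ultrafilter α, IsFreeUF p ∧ s ∈ p) ↔ s.Infinite := by
  refine ⟨fun ⟨p, hp, hs⟩ => hp.infinite_of_mem hs, fun hs => ?_⟩
  have := hs.cofinite_inf_principal_neBot
  obtain ⟨p, hp⟩ := Ultrafilter.exists_le (cofinite ⊓ 𝓟 s)
  exact ⟨p, (isFreeUF_iff_le_cofinite p).2 (hp.trans inf_le_left),
    hp.trans inf_le_right (mem_principal_self s)⟩

lemma exists_isFreeUF_forall_mem_of_biInter_infinite {ι : Type*} (S : ι → Set α) (X : Set ι)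
    (hS : ∀ F ⊆ X, F.Finite → (⋂ i ∈ F, S i).Infinite) :
    ∃ p : Ultrafilter α, IsFreeUF p ∧ ∀ i ∈ X, S i ∈ p := by
  have : (cofinite ⊓ generate (S '' X)).NeBot := by
    refine inf_neBot_iff.2 fun c hc u hu => ?_
    obtain ⟨F, hFX, hFfin, hFu⟩ :=
      exists_subset_image_finite_and.1 (mem_generate_iff.1 hu)
    rw [sInter_image] at hFu
    obtain ⟨x, hx, hxc⟩ := ((hS F hFX hFfin).sdiff (mem_cofinite.1 hc)).nonempty
    exact ⟨x, not_not.1 hxc, hFu hx⟩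
  obtain ⟨p, hp⟩ := Ultrafilter.exists_le (cofinite ⊓ generate (S '' X))
  exact ⟨p, (isFreeUF_iff_le_cofinite p).2 (hp.trans inf_le_left),
    fun i hi => hp.trans inf_le_right (mem_generate_of_mem (mem_image_of_mem S hi))⟩

end FreeUltrafilter

section Group

variable {G : Type*} [Group G]

lemma not_isSparse_iff_exists_isFreeUF (A : Set G) :
    ¬ IsSparse A ↔ ∃ p : Ultrafilter G, IsFreeUF p ∧ {g | (g * ·) '' A ∈ p}.Infinite := by
  unfold IsSparse
  push Not
  constructor
  · rintro ⟨X, hX, hXF⟩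
    obtain ⟨p, hp, hXp⟩ := exists_isFreeUF_forall_mem_of_biInter_infinite
      (fun g => (g * ·) '' A) X fun F hFX hF => hXF F hFX hF
    exact ⟨p, hp, hX.mono hXp⟩
  · rintro ⟨p, hp, hT⟩
    exact ⟨_, hT, fun F hFT hF => hp.infinite_of_mem ((biInter_mem hF).2 hFT)⟩

lemma mem_ufMul_iff {q p : Ultrafilter G} {A : Set G} :
    A ∈ ufMul q p ↔ {x | (x * ·) ⁻¹' A ∈ p} ∈ q :=
  mem_bind'

lemma mem_ufMul_iff_inv_mem {q p : Ultrafilter G} {A : Set G} :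
    A ∈ ufMul q p ↔ {g | (g * ·) '' A ∈ p}⁻¹ ∈ q := by
  rw [mem_ufMul_iff]
  congr!
  ext x
  simp [image_mul_left]

end Group

theorem stmt8_general {G : Type*} [Group G] (A : Set G) :
    ¬ IsSparse A ↔
      ∃ q p : Ultrafilter G, IsFreeUF q ∧ IsFreeUF p ∧ A ∈ ufMul q p := by
  rw [not_isSparse_iff_exists_isFreeUF, exists_comm]
  refine exists_congr fun p => ?_
  simp_rw [mem_ufMul_iff_inv_mem, ← infinite_inv (s := {g | (g * ·) '' A ∈ p}),
    ← exists_isFreeUF_mem_iff_infinite]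
  constructor
  · rintro ⟨hp, q, hq, hT⟩
    exact ⟨q, hq, hp, hT⟩
  · rintro ⟨q, hq, hp, hT⟩
    exact ⟨hp, q, hq, hT⟩

theorem stmt8 {G : Type*} [Group G] [Infinite G] (A : Set G) :
    ¬ IsSparse A ↔
      ∃ q p : Ultrafilter G, IsFreeUF q ∧ IsFreeUF p ∧ A ∈ ufMul q p :=
  stmt8_general A
end

section
/- Let G be a group in which G = A^n for some fixed n and every uncountable subset A ⊆ G (e.g., Shelah's group with n = 6641 under CH, where |G| = ω₁). Then every group bornology 𝓑 on G either equals the power set of G or is contained in the family [G]^{≤ω} of countable subsets of G. -/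
open Pointwise

def IsGroupBornology {G : Type*} [Group G] (I : Set (Set G)) : Prop :=
  IsBornology I ∧ ∀ A ∈ I, ∀ B ∈ I, A * B⁻¹ ∈ I

namespace IsGroupBornology

variable {G : Type*} [Group G] {𝓑 : Set (Set G)}

theorem mem_of_subset (h𝓑 : IsGroupBornology 𝓑) {A B : Set G} (hA : A ∈ 𝓑) (hBA : B ⊆ A) :
    B ∈ 𝓑 :=
  h𝓑.1.1.2.1 A hA B hBA

theorem one_mem (h𝓑 : IsGroupBornology 𝓑) : (1 : Set G) ∈ 𝓑 :=
  h𝓑.1.2.1 _ (Set.finite_singleton 1)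

theorem inv_mem (h𝓑 : IsGroupBornology 𝓑) {A : Set G} (hA : A ∈ 𝓑) : A⁻¹ ∈ 𝓑 := by
  simpa using h𝓑.2 1 h𝓑.one_mem A hA

theorem mul_mem (h𝓑 : IsGroupBornology 𝓑) {A B : Set G} (hA : A ∈ 𝓑) (hB : B ∈ 𝓑) :
    A * B ∈ 𝓑 := by
  simpa using h𝓑.2 A hA B⁻¹ (h𝓑.inv_mem hB)

theorem pow_mem (h𝓑 : IsGroupBornology 𝓑) {A : Set G} (hA : A ∈ 𝓑) (k : ℕ) : A ^ k ∈ 𝓑 := by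
  induction k with
  | zero => simpa using h𝓑.one_mem
  | succ k ih => simpa [pow_succ] using h𝓑.mul_mem ih hA

end IsGroupBornology

theorem stmt9 {G : Type*} [Group G] (n : ℕ)
    (hG : ∀ A : Set G, ¬ A.Countable → A ^ n = Set.univ)
    (𝓑 : Set (Set G)) (h𝓑 : IsGroupBornology 𝓑) :
    (∀ S : Set G, S ∈ 𝓑) ∨ (∀ A ∈ 𝓑, A.Countable) := by
  refine or_iff_not_imp_right.2 fun h S => ?_
  obtain ⟨A, hA, hA_uncountable⟩ : ∃ A ∈ 𝓑, ¬ A.Countable := by simpa using h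
  have huniv : Set.univ ∈ 𝓑 := hG A hA_uncountable ▸ h𝓑.pow_mem hA n
  exact h𝓑.mem_of_subset huniv (Set.subset_univ S)
end

section
/- Let m ≥ 3 and let G be a group with center containing an element c of order m such that for every g ∈ G ∖ {e}, either g ∈ {c, c², …, c^{m−1}} or g^m ∈ {c, c², …, c^{m−1}}. Then G is non-uniformizable: every group filter φ on G with ∩φ = {e} is principal (i.e., {e} ∈ φ). -/
/-!
Separation lets one choose a member `A` of the group filter missing the finitely many
nontrivial powers `c, c², …, c^{m-1}`, and repeated use of `B B⁻¹ ⊆ A` gives a member `B`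
with `B^j ⊆ A` for all `j ≤ m`. Each `g ≠ 1` has `g` or `g^m` among those powers, so
`g ∉ B`; hence `B = {1}`.
-/

open Pointwise

/-- A (proper) group filter on `G`. -/
def IsGroupFilter {G : Type*} [Group G] (φ : Set (Set G)) : Prop :=
  Set.univ ∈ φ ∧ ∅ ∉ φ ∧
  (∀ A ∈ φ, ∀ B ∈ φ, A ∩ B ∈ φ) ∧
  (∀ A ∈ φ, ∀ B : Set G, A ⊆ B → B ∈ φ) ∧
  (∀ A ∈ φ, ∃ B ∈ φ, B * B⁻¹ ⊆ A)

namespace IsGroupFilter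

variable {G : Type*} [Group G] {φ : Set (Set G)}

def toFilter (hφ : IsGroupFilter φ) : Filter G where
  sets := φ
  univ_sets := hφ.1
  sets_of_superset hA hAB := hφ.2.2.2.1 _ hA _ hAB
  inter_sets hA hB := hφ.2.2.1 _ hA _ hB

lemma one_mem (hφ : IsGroupFilter φ) {A : Set G} (hA : A ∈ φ) : (1 : G) ∈ A := by
  obtain ⟨B, hB, hBA⟩ := hφ.2.2.2.2 A hA
  obtain ⟨b, hb⟩ := Set.nonempty_iff_ne_empty.2 fun h => hφ.2.1 (h ▸ hB)
  simpa using hBA (Set.mul_mem_mul hb (Set.inv_mem_inv.2 hb))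

lemma exists_mul_self_subset (hφ : IsGroupFilter φ) {A : Set G} (hA : A ∈ φ) :
    ∃ C ∈ φ, C * C ⊆ A := by
  obtain ⟨B, hB, hBA⟩ := hφ.2.2.2.2 A hA
  obtain ⟨C, hC, hCB⟩ := hφ.2.2.2.2 B hB
  have h1 : (1 : G) ∈ C⁻¹ := by simpa using hφ.one_mem hC
  have hC_sub : C ⊆ B := (Set.subset_mul_left C h1).trans hCB
  have hCinv_sub : C⁻¹ ⊆ B := (Set.subset_mul_right C⁻¹ (by simpa using h1)).trans hCB
  exact ⟨C, hC, (Set.mul_subset_mul hC_sub (Set.inv_subset.1 hCinv_sub)).trans hBA⟩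

lemma exists_pow_two_pow_subset (hφ : IsGroupFilter φ) {A : Set G} (hA : A ∈ φ) (n : ℕ) :
    ∃ B ∈ φ, B ^ 2 ^ n ⊆ A := by
  induction n with
  | zero => exact ⟨A, hA, by simp⟩
  | succ n ih =>
    obtain ⟨B, hB, hBA⟩ := ih
    obtain ⟨C, hC, hCB⟩ := hφ.exists_mul_self_subset hB
    refine ⟨C, hC, ?_⟩
    rw [pow_succ', pow_mul, sq]
    exact (Set.pow_subset_pow_left hCB).trans hBA

lemma exists_forall_pow_subset (hφ : IsGroupFilter φ) {A : Set G} (hA : A ∈ φ) (n : ℕ) :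
    ∃ B ∈ φ, ∀ k ≤ n, B ^ k ⊆ A := by
  obtain ⟨B, hB, hBA⟩ := hφ.exists_pow_two_pow_subset hA n
  exact ⟨B, hB, fun k hk =>
    (Set.pow_subset_pow_right (hφ.one_mem hB) (hk.trans n.lt_two_pow_self.le)).trans hBA⟩

lemma exists_mem_disjoint_of_finite (hφ : IsGroupFilter φ) (hsep : ⋂₀ φ = {(1 : G)})
    {S : Set G} (hS : S.Finite) (h1 : (1 : G) ∉ S) : ∃ A ∈ φ, Disjoint A S := by
  have hmem : ∀ s ∈ S, ∀ᶠ x in hφ.toFilter, x ≠ s := by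
    intro s hs
    have : s ∉ ⋂₀ φ := by rw [hsep]; exact fun h => h1 (Set.mem_singleton_iff.1 h ▸ hs)
    obtain ⟨A, hA, hsA⟩ := by simpa only [Set.mem_sInter, not_forall, exists_prop] using this
    exact Filter.mem_of_superset (show A ∈ hφ.toFilter from hA) fun x hx h => hsA (h ▸ hx)
  refine ⟨_, (Filter.eventually_all_finite hS).2 hmem, Set.disjoint_left.2 fun x hx hxS => ?_⟩
  exact hx x hxS rfl

end IsGroupFilter

theorem stmt19_general {G : Type*} [Group G] (m : ℕ) (c : G)
    (hord : orderOf c = m)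
    (hG : ∀ g : G, g ≠ 1 →
      (∃ k, 1 ≤ k ∧ k ≤ m - 1 ∧ g = c ^ k) ∨
      (∃ k, 1 ≤ k ∧ k ≤ m - 1 ∧ g ^ m = c ^ k))
    (φ : Set (Set G)) (hφ : IsGroupFilter φ) (hsep : ⋂₀ φ = {(1 : G)}) :
    {(1 : G)} ∈ φ := by
  set S := (c ^ ·) '' Set.Icc 1 (m - 1)
  have h1S : (1 : G) ∉ S := by
    rintro ⟨k, ⟨hk1, hk2⟩, hck⟩
    exact pow_ne_one_of_lt_orderOf (by omega) (by omega) hck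
  obtain ⟨A, hA, hAS⟩ :=
    hφ.exists_mem_disjoint_of_finite hsep ((Set.finite_Icc _ _).image _) h1S
  obtain ⟨B, hB, hBA⟩ := hφ.exists_forall_pow_subset hA m
  refine hφ.2.2.2.1 B hB _ fun g hg => by_contra fun hg1 => ?_
  obtain ⟨j, hj, hgS⟩ : ∃ j ≤ m, g ^ j ∈ S := by
    rcases hG g hg1 with ⟨k, hk1, hk2, hgk⟩ | ⟨k, hk1, hk2, hgk⟩
    · exact ⟨1, by omega, k, ⟨hk1, hk2⟩, by simp [hgk]⟩
    · exact ⟨m, le_rfl, k, ⟨hk1, hk2⟩, hgk.symm⟩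
  exact Set.disjoint_left.1 hAS (hBA j hj (Set.pow_mem_pow hg)) hgS

theorem stmt19 {G : Type*} [Group G] (m : ℕ) (hm : 3 ≤ m) (c : G)
    (hc : c ∈ Subgroup.center G) (hord : orderOf c = m)
    (hG : ∀ g : G, g ≠ 1 →
      (∃ k, 1 ≤ k ∧ k ≤ m - 1 ∧ g = c ^ k) ∨
      (∃ k, 1 ≤ k ∧ k ≤ m - 1 ∧ g ^ m = c ^ k))
    (φ : Set (Set G)) (hφ : IsGroupFilter φ) (hsep : ⋂₀ φ = {(1 : G)}) :
    {(1 : G)} ∈ φ :=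
  stmt19_general m c hord hG φ hφ hsep
end
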